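/- arXiv:1110.5464 — 2 statements merged into one kernel-verified Lean document; each statement's English description precedes it below -/
import Mathlib

section
/- On the Hirzebruch surface F_1, for integers b, k with k ≥ b ≥ 4, dim Ext^1(B, A) = 0 if b ≤ k < (3b-3)/2, and dim Ext^1(B, A) = 4k - 6b + 7 if k ≥ (3b-3)/2, where A ≡ 2C_0 + (2b-k-2)f and B ≡ C_0 + (k-b+2)f. -/
/-- `h^0(ℙ¹, 𝒪(m)) = max(m+1, 0)`. -/
def h0P1 (m : ℤ) : ℕ := (m + 1).toNat

/-- `h^1(ℙ¹, 𝒪(m)) = max(-m-1, 0)`. -/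
def h1P1 (m : ℤ) : ℕ := (-m - 1).toNat

/-- Cohomology `h^i` of the line bundle `𝒪(a·C₀ + c·f)` on the Hirzebruch surface
`𝔽₁ = ℙ(𝒪 ⊕ 𝒪(-1))` for `a ≥ 0`, computed via the Leray isomorphism from the
pushforward `π_*(𝒪(a C₀ + c f)) = ⊕_{j=0}^{a} 𝒪_{ℙ¹}(c - j)` along `π : 𝔽₁ → ℙ¹`. -/
def hF1nn (i : ℕ) (a c : ℤ) : ℕ :=
  match i with
  | 0 => (Finset.range (a.toNat + 1)).sum fun j => h0P1 (c - (j : ℤ))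
  | 1 => (Finset.range (a.toNat + 1)).sum fun j => h1P1 (c - (j : ℤ))
  | _ => 0

/-- `h^i(𝔽₁, 𝒪(a·C₀ + c·f))`, where `C₀` is the section with `C₀² = -1` and `f` a fiber.
For `a ≤ -2` it is computed by Serre duality with `K_{𝔽₁} = -2C₀ - 3f`;
for `a = -1` all cohomology vanishes. -/
def hF1 (i : ℕ) (a c : ℤ) : ℕ :=
  if 0 ≤ a then hF1nn i a c
  else if a = -1 then 0
  else if i ≤ 2 then hF1nn (2 - i) (-2 - a) (-3 - c) else 0

theorem hF1_one_one (c : ℤ) : hF1 1 1 c = h1P1 c + h1P1 (c - 1) := by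
  simp [hF1, hF1nn, Finset.sum_range_succ]

theorem h1P1_eq_zero {m : ℤ} (hm : -1 ≤ m) : h1P1 m = 0 := by
  unfold h1P1; omega

theorem natCast_h1P1 {m : ℤ} (hm : m ≤ -1) : (h1P1 m : ℤ) = -m - 1 := by
  unfold h1P1; omega

theorem stmt4_general (b k : ℤ) :
    (2*k < 3*b - 3 → hF1 1 1 (3*b - 2*k - 4) = 0) ∧
    (3*b - 3 ≤ 2*k → (hF1 1 1 (3*b - 2*k - 4) : ℤ) = 4*k - 6*b + 7) := by
  rw [hF1_one_one]
  constructor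
  · intro hk
    rw [h1P1_eq_zero (by omega), h1P1_eq_zero (by omega)]
  · intro hk
    push_cast
    rw [natCast_h1P1 (by omega), natCast_h1P1 (by omega)]
    ring

/-- On `F1`, with `A = 2C0 + (2b-k-2)f` and `B = C0 + (k-b+2)f` and `k >= b >= 4`,
`dim Ext^1(B, A) = h^1(F1, A - B)` (with `A - B = C0 + (3b-2k-4)f`) equals `0` when
`b <= k < (3b-3)/2` and equals `4k - 6b + 7` when `k >= (3b-3)/2`. -/
theorem stmt4 (b k : ℤ) (hb : 4 ≤ b) (hbk : b ≤ k) :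
    (2*k < 3*b - 3 → hF1 1 1 (3*b - 2*k - 4) = 0) ∧
    (3*b - 3 ≤ 2*k → (hF1 1 1 (3*b - 2*k - 4) : ℤ) = 4*k - 6*b + 7) :=
  stmt4_general b k
end

section
/- Let E = A ⊕ B on F_1 with A ≡ 2C_0 + (2b-k-2)f, B ≡ C_0 + (k-b+2)f and b ≤ k < (3b-3)/2, b ≥ 4. Then h^0(F_1, E ⊗ E^∨) = 6b - 4k - 5. -/
/-!
`E ⊗ E^∨ ≅ 𝒪² ⊕ 𝒪(A - B) ⊕ 𝒪(B - A)`. The summand `B - A ≡ -C₀ + (2k-3b+4)f` has no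
sections, since it is negative on a fiber, while `π_* 𝒪(C₀ + mf) = 𝒪(m) ⊕ 𝒪(m-1)` gives
`h^0(𝒪(A - B)) = (m + 1) + m` for `m = 3b - 2k - 4`, which is `≥ 0` exactly when `2k < 3b - 3`.
-/

theorem h0P1_eq_of_neg_one_le {m : ℤ} (hm : -1 ≤ m) : (h0P1 m : ℤ) = m + 1 := by
  rw [h0P1, Int.toNat_of_nonneg (by omega)]

theorem hF1_zero_zero (c : ℤ) : hF1 0 0 c = h0P1 c := by
  simp [hF1, hF1nn]

theorem hF1_zero_one (c : ℤ) : hF1 0 1 c = h0P1 c + h0P1 (c - 1) := by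
  simp [hF1, hF1nn, Finset.sum_range_succ]

theorem hF1_neg_one (i : ℕ) (c : ℤ) : hF1 i (-1) c = 0 := by
  simp [hF1]

theorem stmt12_general (b k : ℤ) (hk : 2*k < 3*b - 3) :
    ((2 * hF1 0 0 0 + hF1 0 1 (3*b - 2*k - 4) + hF1 0 (-1) (2*k - 3*b + 4) : ℕ) : ℤ)
      = 6*b - 4*k - 5 := by
  rw [hF1_zero_zero, hF1_zero_one, hF1_neg_one]
  push_cast
  rw [h0P1_eq_of_neg_one_le (by norm_num), h0P1_eq_of_neg_one_le (by omega),
    h0P1_eq_of_neg_one_le (by omega)]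
  ring

/-- Let `E = A ⊕ B` on `F1` with `A = 2C0 + (2b-k-2)f`, `B = C0 + (k-b+2)f` and
`b <= k < (3b-3)/2`, `b >= 4`. Since `E ⊗ E^∨ ≅ O ⊕ O ⊕ (A-B) ⊕ (B-A)` with
`A - B = C0 + (3b-2k-4)f` and `B - A = -C0 + (2k-3b+4)f`, one has
`h^0(F1, E ⊗ E^∨) = 6b - 4k - 5`. -/
theorem stmt12 (b k : ℤ) (hb : 4 ≤ b) (hbk : b ≤ k) (hk : 2*k < 3*b - 3) :
    ((2 * hF1 0 0 0 + hF1 0 1 (3*b - 2*k - 4) + hF1 0 (-1) (2*k - 3*b + 4) : ℕ) : ℤ)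
      = 6*b - 4*k - 5 :=
  stmt12_general b k hk
end
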